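/- arXiv:1212.1125 — 2 statements merged into one kernel-verified Lean document; each statement's English description precedes it below -/
import Mathlib

section
/- Let n ≥ 2 be a natural number that is not a perfect square, let a = ⌊√n⌋ be the integer part of its square root, and let r = n − a² be the remainder. Then the real number √n satisfies a + r/(2a+1) < √n < a + r/(2a). -/
theorem ortega_heron_bracket (n : ℕ) (hn : 2 ≤ n) (hsq : ¬ ∃ m : ℕ, m * m = n)
    (a r : ℕ) (ha : a = Nat.sqrt n) (hr : r = n - a ^ 2) :
    (a : ℝ) + r / (2 * a + 1) < Real.sqrt n ∧
      Real.sqrt n < (a : ℝ) + r / (2 * a) := by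
  have ha1 : 1 ≤ a := by
    rw [ha]
    exact Nat.le_sqrt.mpr (by omega)
  have hsq2 : a ^ 2 = a * a := sq a
  have hlow : a ^ 2 < n := by
    rcases Nat.lt_or_ge (a ^ 2) n with h1 | h1
    · exact h1
    · have h2 : a ^ 2 ≤ n := by rw [ha]; exact Nat.sqrt_le' n
      exact absurd ⟨a, by rw [← hsq2]; omega⟩ hsq
  have hhigh : n < (a + 1) ^ 2 := by rw [ha]; exact Nat.lt_succ_sqrt' n
  have hh2 : (a + 1) ^ 2 = a * a + 2 * a + 1 := by ring
  have hr1 : 1 ≤ r := by omega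
  have hr2 : r ≤ 2 * a := by omega
  have hnr : n = a ^ 2 + r := by omega
  have haR : (1 : ℝ) ≤ (a : ℝ) := by exact_mod_cast ha1
  have hrR1 : (1 : ℝ) ≤ (r : ℝ) := by exact_mod_cast hr1
  have hrR2 : (r : ℝ) ≤ 2 * a := by exact_mod_cast hr2
  have hnR : (n : ℝ) = (a : ℝ) ^ 2 + r := by exact_mod_cast hnr
  have hpos1 : (0 : ℝ) < 2 * (a : ℝ) + 1 := by linarith
  have hpos2 : (0 : ℝ) < 2 * (a : ℝ) := by linarith
  constructor
  · rw [Real.lt_sqrt (by positivity), hnR]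
    have key : ((a : ℝ) + r / (2 * a + 1)) ^ 2 < (a : ℝ) ^ 2 + r := by
      have e : ((a : ℝ) + r / (2 * a + 1)) ^ 2 * (2 * a + 1) ^ 2
          < ((a : ℝ) ^ 2 + r) * (2 * a + 1) ^ 2 := by
        field_simp
        nlinarith [sq_nonneg ((r : ℝ)), sq_nonneg ((a : ℝ))]
      exact lt_of_mul_lt_mul_right e (by positivity)
    exact key
  · rw [Real.sqrt_lt' (by positivity), hnR]
    have key : ((a : ℝ) ^ 2 + r) * (2 * a) ^ 2 < ((a : ℝ) + r / (2 * a)) ^ 2 * (2 * a) ^ 2 := by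
      field_simp
      nlinarith [sq_nonneg ((r : ℝ))]
    exact lt_of_mul_lt_mul_right key (by positivity)
end

section
/- Let n be a positive integer that is not a perfect square, and let x, y be positive integers with x² − n·y² = 1. Then √n < x/y, and for all positive integers p, q with q ≤ y and √n < p/q one has x/y ≤ p/q; that is, x/y is the best upper rational approximation of √n among fractions with denominator at most y. -/
theorem pell_best_upper_approximation (n : ℕ) (hn : 0 < n)
    (hsq : ¬ ∃ m : ℕ, m * m = n) (x y : ℕ) (hx : 0 < x) (hy : 0 < y)
    (hpell : (x : ℤ) ^ 2 - (n : ℤ) * (y : ℤ) ^ 2 = 1) :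
    Real.sqrt n < (x : ℝ) / y ∧
      ∀ p q : ℕ, 0 < p → 0 < q → q ≤ y → Real.sqrt n < (p : ℝ) / q →
        (x : ℝ) / y ≤ (p : ℝ) / q := by
  have hy' : (0 : ℝ) < y := by exact_mod_cast hy
  have hx' : (1 : ℝ) ≤ x := by exact_mod_cast hx
  set s := Real.sqrt n with hs
  have hs0 : 0 ≤ s := Real.sqrt_nonneg _
  have hs2 : s ^ 2 = n := Real.sq_sqrt (by positivity)
  have hs1 : 1 ≤ s := by
    rw [hs, show (1 : ℝ) = Real.sqrt 1 by simp]
    exact Real.sqrt_le_sqrt (by exact_mod_cast hn)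
  clear_value s
  have hpellR : (x : ℝ) ^ 2 = (n : ℝ) * (y : ℝ) ^ 2 + 1 := by
    have h : (x : ℤ) ^ 2 = (n : ℤ) * (y : ℤ) ^ 2 + 1 := by linarith
    exact_mod_cast h
  have hxy : s * y < x := by
    nlinarith [sq_nonneg ((x : ℝ) + s * y), mul_pos hy' hy']
  constructor
  · rw [lt_div_iff₀ hy']
    exact hxy
  · intro p q hp hq hqy hspq
    by_contra hcon
    push_neg at hcon
    have hq' : (0 : ℝ) < q := by exact_mod_cast hq
    have hqy' : (q : ℝ) ≤ y := by exact_mod_cast hqy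
    have hsqp : s * q < p := (lt_div_iff₀ hq').mp hspq
    have hint : (p : ℝ) * y + 1 ≤ (x : ℝ) * q := by
      have h1 : (p : ℝ) * y < x * q := by
        rw [div_lt_div_iff₀ hq' hy'] at hcon
        linarith
      have h2 : (p : ℤ) * y < x * q := by exact_mod_cast h1
      have h3 : (p : ℤ) * y + 1 ≤ x * q := h2
      exact_mod_cast h3
    -- q * (x - s*y) > 1, and (x - s*y)*(x + s*y) = 1, x + s*y > q
    have key : (q : ℝ) * ((x : ℝ) - s * y) > 1 := by nlinarith
    have hprod : ((x : ℝ) - s * y) * ((x : ℝ) + s * y) = 1 := by nlinarith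
    have hsy : (y : ℝ) ≤ s * y := le_mul_of_one_le_left (le_of_lt hy') hs1
    have hbig : (q : ℝ) < (x : ℝ) + s * y := by linarith
    have hT : (0 : ℝ) < (x : ℝ) + s * y := by linarith
    have h5 : (1 : ℝ) * ((x : ℝ) + s * y) <
        (q : ℝ) * ((x : ℝ) - s * y) * ((x : ℝ) + s * y) :=
      mul_lt_mul_of_pos_right key hT
    rw [one_mul, mul_assoc, hprod, mul_one] at h5
    linarith
end
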